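/- For every odd m ≥ 3, the polynomial identity φ_{2m}(x) = (−1)^{φ(m)/2} · φ_m(4 − x) holds in ℝ[x], where φ(m) denotes Euler's totient function. -/

import Mathlib

open Polynomial
/-- `phiPoly n` : for `n ≥ 3`, the polynomial `∏_{0 < k < n/2, gcd(k,n)=1} (X - 4 sin²(kπ/n))` in `ℝ[X]`,
with `phiPoly 1 = X` and `phiPoly 2 = X - 4`. -/
noncomputable def phiPoly : ℕ → Polynomial ℝ
  | 1 => X
  | 2 => X - 4
  | n => ∏ k ∈ Finset.filter (fun k => 0 < k ∧ 2 * k < n ∧ Nat.gcd k n = 1) (Finset.range n),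
      (X - C (4 * (Real.sin ((k : ℝ) * Real.pi / (n : ℝ)))^2))

lemma phiPoly_of_ge (n : ℕ) (hn : 3 ≤ n) :
    phiPoly n = ∏ k ∈ Finset.filter (fun k => 0 < k ∧ 2 * k < n ∧ Nat.gcd k n = 1) (Finset.range n),
      (X - C (4 * (Real.sin ((k : ℝ) * Real.pi / (n : ℝ)))^2)) := by
  match n, hn with
  | (n+3), _ => rfl

lemma gcd_sub_left (a m : ℕ) (h : a ≤ m) : Nat.gcd (m - a) m = Nat.gcd a m := by
  rw [show Nat.gcd (m - a) m = Nat.gcd (m - a) (a + (m - a)) from by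
      rw [Nat.add_sub_cancel' h],
    Nat.gcd_add_self_right, Nat.gcd_comm, Nat.gcd_sub_self_right h]

lemma card_half (m : ℕ) (hm : 3 ≤ m) (hodd : Odd m) :
    (Finset.filter (fun j => 0 < j ∧ 2 * j < m ∧ Nat.gcd j m = 1) (Finset.range m)).card
      = Nat.totient m / 2 := by
  have hmod : m % 2 = 1 := Nat.odd_iff.mp hodd
  have hcardB : (Finset.filter (fun j => 0 < j ∧ 2 * j < m ∧ Nat.gcd j m = 1)
      (Finset.range m)).card
      = (Finset.filter (fun j => m < 2 * j ∧ Nat.gcd j m = 1) (Finset.range m)).card := by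
    apply Finset.card_nbij' (fun j => m - j) (fun j => m - j)
    · intro j hj
      rw [Finset.mem_coe, Finset.mem_filter, Finset.mem_range] at hj
      rw [Finset.mem_coe, Finset.mem_filter, Finset.mem_range]
      beta_reduce
      refine ⟨by omega, by omega, ?_⟩
      rw [gcd_sub_left j m (by omega)]; exact hj.2.2.2
    · intro j hj
      rw [Finset.mem_coe, Finset.mem_filter, Finset.mem_range] at hj
      rw [Finset.mem_coe, Finset.mem_filter, Finset.mem_range]
      beta_reduce
      refine ⟨by omega, by omega, by omega, ?_⟩
      rw [gcd_sub_left j m (by omega)]; exact hj.2.2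
    · intro j hj
      rw [Finset.mem_coe, Finset.mem_filter, Finset.mem_range] at hj
      beta_reduce
      omega
    · intro j hj
      rw [Finset.mem_coe, Finset.mem_filter, Finset.mem_range] at hj
      beta_reduce
      omega
  have hunion : Nat.totient m
      = (Finset.filter (fun j => 0 < j ∧ 2 * j < m ∧ Nat.gcd j m = 1) (Finset.range m)).card
        + (Finset.filter (fun j => m < 2 * j ∧ Nat.gcd j m = 1) (Finset.range m)).card := by
    rw [Nat.totient]
    rw [show Finset.filter (fun a => Nat.Coprime m a) (Finset.range m)
        = Finset.filter (fun j => (0 < j ∧ 2 * j < m ∧ Nat.gcd j m = 1)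
            ∨ (m < 2 * j ∧ Nat.gcd j m = 1)) (Finset.range m) from ?_]
    · rw [Finset.filter_or]
      apply Finset.card_union_of_disjoint
      rw [Finset.disjoint_filter]
      intro j _ hj1 hj2
      omega
    · apply Finset.filter_congr
      intro j hj
      rw [Finset.mem_range] at hj
      unfold Nat.Coprime
      constructor
      · intro hg
        have hj0 : 0 < j := by
          rcases Nat.eq_zero_or_pos j with h | h
          · subst h; rw [Nat.gcd_zero_right] at hg; omega
          · exact h
        have hg' : Nat.gcd j m = 1 := by rwa [Nat.gcd_comm]
        have hne : 2 * j ≠ m := by intro h; omega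
        rcases lt_or_gt_of_ne hne with h | h
        · exact Or.inl ⟨hj0, h, hg'⟩
        · exact Or.inr ⟨h, hg'⟩
      · rintro (⟨_, _, hg⟩ | ⟨_, hg⟩) <;> rwa [Nat.gcd_comm]
  omega

lemma sin_key (m j : ℕ) (hm : 3 ≤ m) (hj : 2 * j < m) :
    4 * (Real.sin (((m - 2 * j : ℕ) : ℝ) * Real.pi / ((2 * m : ℕ) : ℝ)))^2
      = 4 - 4 * (Real.sin ((j : ℝ) * Real.pi / (m : ℝ)))^2 := by
  have hmR : (m : ℝ) ≠ 0 := by positivity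
  have hcast : ((m - 2 * j : ℕ) : ℝ) = (m : ℝ) - 2 * j := by
    push_cast [Nat.cast_sub (by omega : 2 * j ≤ m)]; ring
  have harg : ((m : ℝ) - 2 * j) * Real.pi / ((2 * m : ℕ) : ℝ)
      = Real.pi / 2 - (j : ℝ) * Real.pi / m := by
    push_cast
    field_simp
  rw [hcast, harg, Real.sin_pi_div_two_sub, Real.cos_sq']
  ring


set_option maxRecDepth 8000 in
/-- For odd `m ≥ 3`: `φ_{2m}(x) = (-1)^{totient(m)/2} · φ_m(4 - x)` in `ℝ[X]`. -/
theorem phi_two_mul_odd (m : ℕ) (hm : 3 ≤ m) (hodd : Odd m) :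
    phiPoly (2 * m) = (-1 : Polynomial ℝ) ^ (Nat.totient m / 2) * (phiPoly m).comp (4 - X) := by
  have hmod : m % 2 = 1 := Nat.odd_iff.mp hodd
  rw [phiPoly_of_ge (2 * m) (by omega), phiPoly_of_ge m hm, Polynomial.prod_comp]
  have hcomp : ∀ j : ℕ, ((X - C (4 * (Real.sin ((j : ℝ) * Real.pi / (m : ℝ)))^2)).comp
      (4 - X) : Polynomial ℝ)
      = -(X - C (4 - 4 * (Real.sin ((j : ℝ) * Real.pi / (m : ℝ)))^2)) := by
    intro j
    rw [sub_comp, X_comp, C_comp, map_sub, map_ofNat C 4]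
    ring
  rw [Finset.prod_congr rfl (fun j _ => hcomp j)]
  have hneg : ∀ (s : Finset ℕ) (f : ℕ → Polynomial ℝ),
      ∏ j ∈ s, (-(f j)) = (-1 : Polynomial ℝ) ^ s.card * ∏ j ∈ s, f j := by
    intro s f
    rw [← Finset.prod_const (-1 : Polynomial ℝ), ← Finset.prod_mul_distrib]
    exact Finset.prod_congr rfl fun j _ => (neg_one_mul (f j)).symm
  rw [hneg]
  rw [card_half m hm hodd, ← mul_assoc, ← pow_add]
  have hev : Even (Nat.totient m / 2 + Nat.totient m / 2) := ⟨_, rfl⟩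
  rw [hev.neg_one_pow, one_mul]
  apply Finset.prod_nbij' (fun k => (m - k) / 2) (fun j => m - 2 * j)
  · intro k hk
    rw [Finset.mem_filter, Finset.mem_range] at hk
    rw [Finset.mem_filter, Finset.mem_range]
    obtain ⟨hk2m, hk0, hk2, hg⟩ := hk
    have hgc : Nat.Coprime k (2 * m) := hg
    have hkodd : k % 2 = 1 := Nat.odd_iff.mp
      (Nat.coprime_two_right.mp (hgc.coprime_dvd_right (dvd_mul_right 2 m)))
    have hkm : Nat.Coprime k m := hgc.coprime_dvd_right (dvd_mul_left m 2)
    have hsub : Nat.gcd (m - k) m = 1 := by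
      rw [gcd_sub_left k m (by omega)]; exact hkm
    have hdvd : (m - k) / 2 ∣ (m - k) := ⟨2, by omega⟩
    refine ⟨by omega, by omega, by omega, ?_⟩
    exact Nat.Coprime.coprime_dvd_left hdvd hsub
  · intro j hj
    rw [Finset.mem_filter, Finset.mem_range] at hj
    rw [Finset.mem_filter, Finset.mem_range]
    obtain ⟨hjm, hj0, hj2, hg⟩ := hj
    refine ⟨by omega, by omega, by omega, ?_⟩
    have h2m : Nat.Coprime (m - 2 * j) m := by
      rw [Nat.Coprime, gcd_sub_left (2 * j) m (by omega)]
      exact Nat.Coprime.mul (Nat.coprime_two_left.mpr hodd) hg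
    have h22 : Nat.Coprime (m - 2 * j) 2 := by
      rw [Nat.coprime_two_right, Nat.odd_iff]; omega
    exact Nat.Coprime.mul_right h22 h2m
  · intro k hk
    rw [Finset.mem_filter, Finset.mem_range] at hk
    obtain ⟨hk2m, hk0, hk2, hg⟩ := hk
    have hgc : Nat.Coprime k (2 * m) := hg
    have hkodd : k % 2 = 1 := Nat.odd_iff.mp
      (Nat.coprime_two_right.mp (hgc.coprime_dvd_right (dvd_mul_right 2 m)))
    omega
  · intro j hj
    rw [Finset.mem_filter, Finset.mem_range] at hj
    omega
  · intro k hk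
    rw [Finset.mem_filter, Finset.mem_range] at hk
    obtain ⟨hk2m, hk0, hk2, hg⟩ := hk
    have hgc : Nat.Coprime k (2 * m) := hg
    have hkodd : k % 2 = 1 := Nat.odd_iff.mp
      (Nat.coprime_two_right.mp (hgc.coprime_dvd_right (dvd_mul_right 2 m)))
    have h1 := sin_key m ((m - k) / 2) hm (by omega)
    rw [show m - 2 * ((m - k) / 2) = k from by omega] at h1
    rw [← h1]
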